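/- arXiv:2406.13379 — 2 statements merged into one kernel-verified Lean document; each statement's English description precedes it below -/
import Mathlib

section
/- Let V and P be real Hilbert spaces, T > 0, and ρ_f, ρ_s ∈ ℝ. Let a_f, a_s, m_f, m_s be continuous symmetric bilinear forms on V and let D : V → P be a continuous linear map. For continuously differentiable functions η, ψ : ℝ → V and continuous functions p, q : ℝ → P, define ⟨A(η,p),(ψ,q)⟩ := ρ_f ∫₀ᵀ m_f(η'(t), ψ(t)) dt + ∫₀ᵀ a_f(η(t), ψ(t)) dt − ∫₀ᵀ ⟨p(t), D ψ(t)⟩_P dt + ρ_s ∫₀ᵀ m_s(η'(t), ψ(t)) dt + ∫₀ᵀ a_s(∫₀ᵗ η(s) ds, ψ(t)) dt − ∫₀ᵀ ⟨D η(t), q(t)⟩_P dt + ρ_f m_f(η(0), ψ(0)) + ρ_s m_s(η(0), ψ(0)). Then ⟨A(η,p),(ψ,q)⟩ = ⟨A(ψ̄,q̄),(η̄,p̄)⟩, where for a function f defined on [0,T] the time reversal is f̄(t) := f(T − t). In other words, the adjoint of the abstract linear fluid–structure interaction operator A has the same structure as the forward operator but with the temporal flow of information reversed. -/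
open scoped InnerProductSpace
open MeasureTheory

/-- The abstract weak-form operator `A` of the linear unsteady fluid–structure interaction
problem (after substituting the solid displacement by the time integral of the velocity):
`⟨A(η,p),(ψ,q)⟩`. -/
noncomputable def fsiForm {V P : Type*} [NormedAddCommGroup V] [InnerProductSpace ℝ V]
    [NormedAddCommGroup P] [InnerProductSpace ℝ P]
    (T ρf ρs : ℝ) (af as mf ms : V →L[ℝ] V →L[ℝ] ℝ) (D : V →L[ℝ] P)
    (η : ℝ → V) (p : ℝ → P) (ψ : ℝ → V) (q : ℝ → P) : ℝ :=
  ρf * (∫ t in (0:ℝ)..T, mf (deriv η t) (ψ t))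
    + (∫ t in (0:ℝ)..T, af (η t) (ψ t))
    - (∫ t in (0:ℝ)..T, ⟪p t, D (ψ t)⟫_ℝ)
    + ρs * (∫ t in (0:ℝ)..T, ms (deriv η t) (ψ t))
    + (∫ t in (0:ℝ)..T, as (∫ s in (0:ℝ)..t, η s) (ψ t))
    - (∫ t in (0:ℝ)..T, ⟪D (η t), q t⟫_ℝ)
    + ρf * mf (η 0) (ψ 0) + ρs * ms (η 0) (ψ 0)

/-!
The terms of the two sides match one by one. The stiffness and coupling terms agree after the
substitution `t ↦ T - t` and the symmetry of `a_f` and of the inner product. For the mass terms,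
`(ψ̄)' = -ψ'(T - ·)` turns the reversed term into `-∫ m(ψ', η)`, and integration by parts in time
produces exactly the difference of the two initial terms `m(η(0), ψ(0))` and `m(ψ(T), η(T))`.
The memory term is an integral over the triangle `0 ≤ s ≤ t ≤ T`, and exchanging the order of
integration, `∫ a_s(∫₀ᵗ η, ψ(t)) dt = ∫ a_s(η(t), ∫ₜᵀ ψ) dt`, is its time reversal.
-/

section TimeReversal

variable {E F G : Type*} [NormedAddCommGroup E] [NormedSpace ℝ E]
  [NormedAddCommGroup F] [NormedSpace ℝ F] [NormedAddCommGroup G] [NormedSpace ℝ G]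

theorem integral_comp_time_reversal (T : ℝ) (f : ℝ → E) :
    ∫ t in (0:ℝ)..T, f (T - t) = ∫ t in (0:ℝ)..T, f t := by
  simp [intervalIntegral.integral_comp_sub_left]

theorem integral_comp_time_reversal_swap {X Y : Type*} (T : ℝ) (Φ : X → Y → E) (Ψ : Y → X → E)
    (hΦΨ : ∀ x y, Φ x y = Ψ y x) (u : ℝ → X) (v : ℝ → Y) :
    ∫ t in (0:ℝ)..T, Φ (u (T - t)) (v (T - t)) = ∫ t in (0:ℝ)..T, Ψ (v t) (u t) := by
  simp_rw [hΦΨ]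
  exact integral_comp_time_reversal T fun t => Ψ (v t) (u t)

theorem integral_bilinear_hasDerivAt_add_eq_sub [CompleteSpace G] (B : E →L[ℝ] F →L[ℝ] G)
    {u u' : ℝ → E} {v v' : ℝ → F} (hu : ∀ t, HasDerivAt u (u' t) t)
    (hv : ∀ t, HasDerivAt v (v' t) t) (hu' : Continuous u') (hv' : Continuous v') (a b : ℝ) :
    (∫ t in a..b, B (u' t) (v t)) + ∫ t in a..b, B (u t) (v' t)
      = B (u b) (v b) - B (u a) (v a) := by
  have hu_cont : Continuous u := continuous_iff_continuousAt.2 fun t => (hu t).continuousAt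
  have hv_cont : Continuous v := continuous_iff_continuousAt.2 fun t => (hv t).continuousAt
  have hcont₁ : Continuous fun t => B (u' t) (v t) := B.continuous₂.comp (hu'.prodMk hv_cont)
  have hcont₂ : Continuous fun t => B (u t) (v' t) := B.continuous₂.comp (hu_cont.prodMk hv')
  rw [← intervalIntegral.integral_add (hcont₁.intervalIntegrable a b)
    (hcont₂.intervalIntegrable a b)]
  refine intervalIntegral.integral_eq_sub_of_hasDerivAt
    (f := fun t => B (u t) (v t)) (fun t _ => ?_)
    ((hcont₁.add hcont₂).intervalIntegrable a b)
  rw [add_comm]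
  exact B.hasDerivAt_of_bilinear (fun _ => hu t) (fun _ => hv t)

/-- Integrate by parts against `t ↦ ∫ s in T..t, g s`, which vanishes at `T`. -/
theorem integral_bilinear_integral_left_eq_right [CompleteSpace E] [CompleteSpace F]
    [CompleteSpace G] (B : E →L[ℝ] F →L[ℝ] G) {f : ℝ → E} {g : ℝ → F}
    (hf : Continuous f) (hg : Continuous g) (T : ℝ) :
    ∫ t in (0:ℝ)..T, B (∫ s in (0:ℝ)..t, f s) (g t)
      = ∫ t in (0:ℝ)..T, B (f t) (∫ s in t..T, g s) := by
  have hparts := integral_bilinear_hasDerivAt_add_eq_sub B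
    (fun t => (hf.integral_hasStrictDerivAt 0 t).hasDerivAt)
    (fun t => (hg.integral_hasStrictDerivAt T t).hasDerivAt) hf hg 0 T
  simp only [intervalIntegral.integral_same, map_zero, zero_apply, sub_zero] at hparts
  simp_rw [intervalIntegral.integral_symm T, map_neg, intervalIntegral.integral_neg] at hparts ⊢
  rw [← sub_eq_zero, sub_neg_eq_add, add_comm, hparts]

end TimeReversal

section SymmetricForms

variable {E : Type*} [NormedAddCommGroup E] [NormedSpace ℝ E]
  (B : E →L[ℝ] E →L[ℝ] ℝ) (hB : ∀ u v, B u v = B v u)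
include hB

theorem integral_deriv_add_initial_eq_time_reversal {η ψ : ℝ → E}
    (hη : ContDiff ℝ 1 η) (hψ : ContDiff ℝ 1 ψ) (T : ℝ) :
    (∫ t in (0:ℝ)..T, B (deriv η t) (ψ t)) + B (η 0) (ψ 0)
      = (∫ t in (0:ℝ)..T, B (deriv (fun t => ψ (T - t)) t) (η (T - t))) + B (ψ T) (η T) := by
  have hparts := integral_bilinear_hasDerivAt_add_eq_sub B
    (fun t => ((hη.differentiable one_ne_zero) t).hasDerivAt)
    (fun t => ((hψ.differentiable one_ne_zero) t).hasDerivAt)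
    (hη.continuous_deriv le_rfl) (hψ.continuous_deriv le_rfl) 0 T
  have hreversed : ∫ t in (0:ℝ)..T, B (deriv (fun t => ψ (T - t)) t) (η (T - t))
      = -∫ t in (0:ℝ)..T, B (η t) (deriv ψ t) := by
    simp_rw [deriv_comp_const_sub, map_neg, neg_apply, hB _ (η _)]
    rw [intervalIntegral.integral_neg,
      integral_comp_time_reversal T fun t => B (η t) (deriv ψ t)]
  rw [hreversed, hB (ψ T)]
  linarith

theorem integral_memory_eq_time_reversal [CompleteSpace E] {f g : ℝ → E}
    (hf : Continuous f) (hg : Continuous g) (T : ℝ) :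
    ∫ t in (0:ℝ)..T, B (∫ s in (0:ℝ)..t, f s) (g t)
      = ∫ t in (0:ℝ)..T, B (∫ s in (0:ℝ)..t, g (T - s)) (f (T - t)) := by
  have hreversal : Continuous fun t => T - t := continuous_const.sub continuous_id
  rw [integral_bilinear_integral_left_eq_right B (f := fun t => g (T - t))
    (g := fun t => f (T - t)) (hg.comp hreversal) (hf.comp hreversal)]
  simp only [intervalIntegral.integral_comp_sub_left, sub_self]
  exact (integral_comp_time_reversal_swap T (fun x y => B x y) (fun y x => B y x) hB g
    fun t => ∫ s in (0:ℝ)..t, f s).symm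

end SymmetricForms

theorem fsi_adjoint_time_reversal_general
    {V P : Type*} [NormedAddCommGroup V] [InnerProductSpace ℝ V] [CompleteSpace V]
    [NormedAddCommGroup P] [InnerProductSpace ℝ P]
    (T : ℝ) (ρf ρs : ℝ)
    (af as mf ms : V →L[ℝ] V →L[ℝ] ℝ)
    (haf : ∀ u v : V, af u v = af v u) (has : ∀ u v : V, as u v = as v u)
    (hmf : ∀ u v : V, mf u v = mf v u) (hms : ∀ u v : V, ms u v = ms v u)
    (D : V →L[ℝ] P)
    (η ψ : ℝ → V) (hη : ContDiff ℝ 1 η) (hψ : ContDiff ℝ 1 ψ)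
    (p q : ℝ → P) :
    fsiForm T ρf ρs af as mf ms D η p ψ q
      = fsiForm T ρf ρs af as mf ms D
          (fun t => ψ (T - t)) (fun t => q (T - t))
          (fun t => η (T - t)) (fun t => p (T - t)) := by
  have hmf_terms := integral_deriv_add_initial_eq_time_reversal mf hmf hη hψ T
  have hms_terms := integral_deriv_add_initial_eq_time_reversal ms hms hη hψ T
  have has_terms := integral_memory_eq_time_reversal as has hη.continuous hψ.continuous T
  simp only [fsiForm, sub_zero]
  rw [integral_comp_time_reversal_swap T (fun x y => af x y) (fun y x => af y x) haf,
    integral_comp_time_reversal_swap T (fun x y => ⟪x, D y⟫_ℝ) (fun y x => ⟪D y, x⟫_ℝ)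
      fun _ _ => real_inner_comm _ _,
    integral_comp_time_reversal_swap T (fun x y => ⟪D x, y⟫_ℝ) (fun y x => ⟪y, D x⟫_ℝ)
      fun _ _ => real_inner_comm _ _]
  linear_combination ρf * hmf_terms + ρs * hms_terms + has_terms

/-- The adjoint of the abstract linear FSI operator has the same structure as the forward
operator, but with the temporal flow of information reversed:
`⟨A(η,p),(ψ,q)⟩ = ⟨A(ψ̄,q̄),(η̄,p̄)⟩` where `f̄(t) = f(T - t)`. -/
theorem fsi_adjoint_time_reversal
    {V P : Type*} [NormedAddCommGroup V] [InnerProductSpace ℝ V] [CompleteSpace V]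
    [NormedAddCommGroup P] [InnerProductSpace ℝ P] [CompleteSpace P]
    (T : ℝ) (hT : 0 < T) (ρf ρs : ℝ)
    (af as mf ms : V →L[ℝ] V →L[ℝ] ℝ)
    (haf : ∀ u v : V, af u v = af v u) (has : ∀ u v : V, as u v = as v u)
    (hmf : ∀ u v : V, mf u v = mf v u) (hms : ∀ u v : V, ms u v = ms v u)
    (D : V →L[ℝ] P)
    (η ψ : ℝ → V) (hη : ContDiff ℝ 1 η) (hψ : ContDiff ℝ 1 ψ)
    (p q : ℝ → P) (hp : Continuous p) (hq : Continuous q) :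
    fsiForm T ρf ρs af as mf ms D η p ψ q
      = fsiForm T ρf ρs af as mf ms D
          (fun t => ψ (T - t)) (fun t => q (T - t))
          (fun t => η (T - t)) (fun t => p (T - t)) :=
  fsi_adjoint_time_reversal_general T ρf ρs af as mf ms haf has hmf hms D η ψ hη hψ p q
end

section
/- Let V be a real Banach space, T > 0, a : V × V → ℝ a continuous symmetric bilinear form, and η, ψ : ℝ → V continuous functions. Then ∫₀ᵀ a(∫₀ᵗ η(s) ds, ψ(t)) dt = ∫₀ᵀ a(∫₀ᵗ ψ̄(s) ds, η̄(t)) dt, where f̄(t) := f(T − t) denotes time reversal. -/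
/-! Integration by parts moves the memory integral onto the second argument,
`∫₀ᵀ a(∫₀ᵗ η, ψ(t)) dt = ∫₀ᵀ a(η(t), ∫ₜᵀ ψ) dt`; the symmetry of `a` and the substitution
`t ↦ T - t` turn the right-hand side into the time-reversed memory term. -/

open MeasureTheory Set intervalIntegral

section Bilinear

variable {E F G : Type*} [NormedAddCommGroup E] [NormedSpace ℝ E]
  [NormedAddCommGroup F] [NormedSpace ℝ F] [NormedAddCommGroup G] [NormedSpace ℝ G]
  [CompleteSpace G]

theorem intervalIntegral.integral_bilinear_deriv_right_eq_sub (B : E →L[ℝ] F →L[ℝ] G)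
    {u u' : ℝ → E} {v v' : ℝ → F} {a b : ℝ}
    (hu : ∀ x ∈ uIcc a b, HasDerivAt u (u' x) x) (hv : ∀ x ∈ uIcc a b, HasDerivAt v (v' x) x)
    (huv' : IntervalIntegrable (fun x => B (u x) (v' x)) volume a b)
    (hu'v : IntervalIntegrable (fun x => B (u' x) (v x)) volume a b) :
    ∫ x in a..b, B (u x) (v' x) = B (u b) (v b) - B (u a) (v a) - ∫ x in a..b, B (u' x) (v x) := by
  rw [eq_sub_iff_add_eq, ← integral_add huv' hu'v]
  exact integral_eq_sub_of_hasDerivAt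
    (fun x hx => B.hasDerivAt_of_bilinear (fun _ => hu x hx) (fun _ => hv x hx)) (huv'.add hu'v)

/-- Integration by parts against the primitives `t ↦ ∫ₐᵗ f` and `t ↦ ∫ᵦᵗ g`: both boundary terms
vanish, since the first primitive vanishes at `a` and the second at `b`. -/
theorem intervalIntegral.integral_bilinear_primitive_left_eq [CompleteSpace E] [CompleteSpace F]
    (B : E →L[ℝ] F →L[ℝ] G) {f : ℝ → E} {g : ℝ → F} (hf : Continuous f) (hg : Continuous g)
    (a b : ℝ) :
    ∫ t in a..b, B (∫ s in a..t, f s) (g t) = ∫ t in a..b, B (f t) (∫ s in t..b, g s) := by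
  have hF : ∀ t, HasDerivAt (fun t => ∫ s in a..t, f s) (f t) t :=
    fun t => (hf.integral_hasStrictDerivAt a t).hasDerivAt
  have hG : ∀ t, HasDerivAt (fun t => ∫ s in b..t, g s) (g t) t :=
    fun t => (hg.integral_hasStrictDerivAt b t).hasDerivAt
  have hFc : Continuous fun t => ∫ s in a..t, f s :=
    continuous_iff_continuousAt.2 fun t => (hF t).continuousAt
  have hGc : Continuous fun t => ∫ s in b..t, g s :=
    continuous_iff_continuousAt.2 fun t => (hG t).continuousAt
  rw [integral_bilinear_deriv_right_eq_sub B (fun t _ => hF t) (fun t _ => hG t)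
    (Continuous.intervalIntegrable (by fun_prop) a b)
    (Continuous.intervalIntegrable (by fun_prop) a b)]
  simp [integral_symm b]

end Bilinear

theorem fsi_memory_term_symmetric_time_reversal_general
    {V : Type*} [NormedAddCommGroup V] [NormedSpace ℝ V] [CompleteSpace V]
    (T : ℝ) (a : V →L[ℝ] V →L[ℝ] ℝ)
    (hsymm : ∀ u v : V, a u v = a v u)
    (η ψ : ℝ → V) (hη : Continuous η) (hψ : Continuous ψ) :
    (∫ t in (0:ℝ)..T, a (∫ s in (0:ℝ)..t, η s) (ψ t))
      = ∫ t in (0:ℝ)..T, a (∫ s in (0:ℝ)..t, ψ (T - s)) (η (T - t)) := by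
  have hreverse : ∀ t, ∫ s in (0:ℝ)..t, ψ (T - s) = ∫ s in T - t..T, ψ s := fun t => by
    simp [integral_comp_sub_left ψ T (a := 0) (b := t)]
  calc (∫ t in (0:ℝ)..T, a (∫ s in (0:ℝ)..t, η s) (ψ t))
      = ∫ t in (0:ℝ)..T, a (∫ s in t..T, ψ s) (η t) := by
        rw [integral_bilinear_primitive_left_eq a hη hψ]
        exact integral_congr fun t _ => hsymm _ _
    _ = ∫ t in (0:ℝ)..T, a (∫ s in T - t..T, ψ s) (η (T - t)) := by
        simpa using (integral_comp_sub_left (fun u => a (∫ s in u..T, ψ s) (η u)) T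
          (a := 0) (b := T)).symm
    _ = ∫ t in (0:ℝ)..T, a (∫ s in (0:ℝ)..t, ψ (T - s)) (η (T - t)) := by
        simp only [hreverse]

/-- Symmetry of the solid memory term under time reversal: for a continuous symmetric
bilinear form `a`,
`∫₀ᵀ a(∫₀ᵗ η(s) ds, ψ(t)) dt = ∫₀ᵀ a(∫₀ᵗ ψ̄(s) ds, η̄(t)) dt`, where `f̄(t) = f(T − t)`. -/
theorem fsi_memory_term_symmetric_time_reversal
    {V : Type*} [NormedAddCommGroup V] [NormedSpace ℝ V] [CompleteSpace V]
    (T : ℝ) (hT : 0 < T) (a : V →L[ℝ] V →L[ℝ] ℝ)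
    (hsymm : ∀ u v : V, a u v = a v u)
    (η ψ : ℝ → V) (hη : Continuous η) (hψ : Continuous ψ) :
    (∫ t in (0:ℝ)..T, a (∫ s in (0:ℝ)..t, η s) (ψ t))
      = ∫ t in (0:ℝ)..T, a (∫ s in (0:ℝ)..t, ψ (T - s)) (η (T - t)) :=
  fsi_memory_term_symmetric_time_reversal_general T a hsymm η ψ hη hψ
end
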